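/- Let M ⊂ ℝⁿ be the boundary of a bounded domain strictly starlike with respect to 0, given by radial function r: S^{n-1} → (0,∞), and suppose the polar parametrization φ(u) = r(u)·u is L-bi-Lipschitz from S^{n-1} to M (Euclidean metric). Then the quasi-inversion f_M(x) = r(x/|x|)²·x/|x|², with f_M(0) = ∞ and f_M(∞) = 0, satisfies for all x, y ∈ ℝⁿ \ {0}: (1/L'⁴)·|x−y|/(|x||y|) ≤ |f_M(x) − f_M(y)| ≤ L'⁴·|x−y|/(|x||y|), where L' is the bi-Lipschitz constant of the radial extension φ₁(x) = |x|·r(x/|x|)·(x/|x|) on ℝⁿ \ {0}. -/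

import Mathlib

/-!
Write `φ₁(x) = r(x/|x|) x` for the radial extension and `ι(x) = x/|x|²` for the inversion in the
unit sphere. Since `φ₁` is positively homogeneous and preserves rays, `f_M = φ₁ ∘ ι ∘ φ₁⁻¹`, and
`|ι x − ι y| = |x − y|/(|x||y|)`. The map `φ₁⁻¹` distorts distances by at most `L'`, and, because
`φ₁` maps `z` and `2z` to points `r(z/|z|)|z|` apart, also `1/L' ≤ r ≤ L'`, so `φ₁⁻¹` distorts
norms by at most `L'`. Hence `φ₁⁻¹` changes `|x − y|/(|x||y|)` by a factor at most `L'³`, and the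
final application of `φ₁` contributes one more factor `L'`.
-/

open Set

theorem div_mul_le_pow_three_mul_div_mul {K d d' p q s t : ℝ} (hK : 0 ≤ K) (hd : 0 ≤ d)
    (hp : 0 < p) (hq : 0 < q) (hs : 0 < s) (ht : 0 < t)
    (hdd' : d' ≤ K * d) (hsp : s ≤ K * p) (htq : t ≤ K * q) :
    d' / (p * q) ≤ K ^ 3 * (d / (s * t)) := by
  rw [mul_div_assoc', div_le_div_iff₀ (by positivity) (by positivity)]
  have hst : s * t ≤ (K * p) * (K * q) := mul_le_mul hsp htq ht.le (by positivity)
  calc d' * (s * t) ≤ K * d * (s * t) := by gcongr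
    _ ≤ K * d * ((K * p) * (K * q)) := by gcongr
    _ = K ^ 3 * d * (p * q) := by ring

section NormedSpace

variable {E : Type*} [NormedAddCommGroup E] [NormedSpace ℝ E]

noncomputable def radialExtension (r : E → ℝ) (x : E) : E := r (‖x‖⁻¹ • x) • x

noncomputable def radialExtensionInv (r : E → ℝ) (x : E) : E := (r (‖x‖⁻¹ • x))⁻¹ • x

def BiLipschitzOn (K : ℝ) (φ : E → E) (s : Set E) : Prop :=
  ∀ x y, x ∈ s → y ∈ s → ‖x - y‖ / K ≤ ‖φ x - φ y‖ ∧ ‖φ x - φ y‖ ≤ K * ‖x - y‖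

theorem inv_norm_smul_smul_of_pos {c : ℝ} (hc : 0 < c) (x : E) :
    ‖c • x‖⁻¹ • (c • x) = ‖x‖⁻¹ • x := by
  rw [norm_smul, Real.norm_of_nonneg hc.le, smul_smul, mul_inv_rev, mul_assoc,
    inv_mul_cancel₀ hc.ne', mul_one]

variable {r : E → ℝ}

theorem radialExtension_smul_of_nonneg {c : ℝ} (hc : 0 ≤ c) (x : E) :
    radialExtension r (c • x) = c • radialExtension r x := by
  rcases hc.eq_or_lt with rfl | hc
  · simp [radialExtension]
  · rw [radialExtension, radialExtension, inv_norm_smul_smul_of_pos hc, smul_comm]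

theorem norm_radialExtension (x : E) : ‖radialExtension r x‖ = |r (‖x‖⁻¹ • x)| * ‖x‖ := by
  rw [radialExtension, norm_smul, Real.norm_eq_abs]

theorem radialExtension_radialExtensionInv {x : E} (hx : 0 < r (‖x‖⁻¹ • x)) :
    radialExtension r (radialExtensionInv r x) = x := by
  rw [radialExtensionInv, radialExtension_smul_of_nonneg (inv_nonneg.2 hx.le), radialExtension,
    inv_smul_smul₀ hx.ne']

variable {K : ℝ}

theorem abs_radius_mem_Icc (hφ : BiLipschitzOn K (radialExtension r) {0}ᶜ) {z : E} (hz : z ≠ 0) :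
    |r (‖z‖⁻¹ • z)| ∈ Icc K⁻¹ K := by
  have hz2 : (2 : ℝ) • z ≠ 0 := smul_ne_zero two_ne_zero hz
  have hsub : z - (2 : ℝ) • z = -z := by rw [two_smul]; abel
  have hφsub : radialExtension r z - radialExtension r ((2 : ℝ) • z) = -radialExtension r z := by
    rw [radialExtension_smul_of_nonneg zero_le_two, two_smul]; abel
  obtain ⟨hlow, hup⟩ := hφ z _ hz hz2
  rw [hsub, hφsub, norm_neg, norm_neg, norm_radialExtension] at hlow hup
  have hzn : 0 < ‖z‖ := norm_pos_iff.2 hz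
  refine ⟨?_, le_of_mul_le_mul_right hup hzn⟩
  rw [div_eq_inv_mul] at hlow
  exact le_of_mul_le_mul_right hlow hzn

theorem radius_pos (hr : ∀ u : E, ‖u‖ = 1 → 0 < r u) {x : E} (hx : x ≠ 0) :
    0 < r (‖x‖⁻¹ • x) :=
  hr _ (norm_smul_inv_norm hx)

theorem pos_of_biLipschitzOn_radialExtension (hφ : BiLipschitzOn K (radialExtension r) {0}ᶜ)
    (hr : ∀ u : E, ‖u‖ = 1 → 0 < r u) {x : E} (hx : x ≠ 0) : 0 < K :=
  (radius_pos hr hx).trans_le <|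
    (le_abs_self _).trans (abs_radius_mem_Icc hφ hx).2

theorem radius_le (hφ : BiLipschitzOn K (radialExtension r) {0}ᶜ)
    (hr : ∀ u : E, ‖u‖ = 1 → 0 < r u) {x : E} (hx : x ≠ 0) : r (‖x‖⁻¹ • x) ≤ K := by
  simpa [abs_of_pos (radius_pos hr hx)] using (abs_radius_mem_Icc hφ hx).2

theorem inv_radius_le (hφ : BiLipschitzOn K (radialExtension r) {0}ᶜ)
    (hr : ∀ u : E, ‖u‖ = 1 → 0 < r u) {x : E} (hx : x ≠ 0) : (r (‖x‖⁻¹ • x))⁻¹ ≤ K := by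
  have h := (abs_radius_mem_Icc hφ hx).1
  rw [abs_of_pos (radius_pos hr hx)] at h
  exact (inv_le_comm₀ (radius_pos hr hx) (pos_of_biLipschitzOn_radialExtension hφ hr hx)).2 h

theorem norm_radialExtensionInv (x : E) :
    ‖radialExtensionInv r x‖ = |r (‖x‖⁻¹ • x)|⁻¹ * ‖x‖ := by
  rw [radialExtensionInv, norm_smul, norm_inv, Real.norm_eq_abs]

theorem radialExtensionInv_ne_zero (hr : ∀ u : E, ‖u‖ = 1 → 0 < r u) {x : E} (hx : x ≠ 0) :
    radialExtensionInv r x ≠ 0 :=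
  smul_ne_zero (inv_ne_zero (radius_pos hr hx).ne') hx

theorem norm_le_mul_norm_radialExtensionInv (hφ : BiLipschitzOn K (radialExtension r) {0}ᶜ)
    (hr : ∀ u : E, ‖u‖ = 1 → 0 < r u) {x : E} (hx : x ≠ 0) :
    ‖x‖ ≤ K * ‖radialExtensionInv r x‖ := by
  have hrx := radius_pos hr hx
  calc ‖x‖ = r (‖x‖⁻¹ • x) * ‖radialExtensionInv r x‖ := by
        rw [norm_radialExtensionInv, abs_of_pos hrx, mul_inv_cancel_left₀ hrx.ne']
    _ ≤ K * ‖radialExtensionInv r x‖ := by gcongr; exact radius_le hφ hr hx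

theorem norm_radialExtensionInv_le (hφ : BiLipschitzOn K (radialExtension r) {0}ᶜ)
    (hr : ∀ u : E, ‖u‖ = 1 → 0 < r u) {x : E} (hx : x ≠ 0) :
    ‖radialExtensionInv r x‖ ≤ K * ‖x‖ := by
  rw [norm_radialExtensionInv, abs_of_pos (radius_pos hr hx)]
  gcongr
  exact inv_radius_le hφ hr hx

theorem norm_sub_le_mul_norm_sub_radialExtensionInv
    (hφ : BiLipschitzOn K (radialExtension r) {0}ᶜ) (hr : ∀ u : E, ‖u‖ = 1 → 0 < r u) {x y : E}
    (hx : x ≠ 0) (hy : y ≠ 0) :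
    ‖x - y‖ ≤ K * ‖radialExtensionInv r x - radialExtensionInv r y‖ := by
  simpa only [radialExtension_radialExtensionInv (radius_pos hr hx),
    radialExtension_radialExtensionInv (radius_pos hr hy)] using
    (hφ _ _ (radialExtensionInv_ne_zero hr hx) (radialExtensionInv_ne_zero hr hy)).2

theorem norm_radialExtensionInv_sub_le
    (hφ : BiLipschitzOn K (radialExtension r) {0}ᶜ) (hr : ∀ u : E, ‖u‖ = 1 → 0 < r u) {x y : E}
    (hx : x ≠ 0) (hy : y ≠ 0) :
    ‖radialExtensionInv r x - radialExtensionInv r y‖ ≤ K * ‖x - y‖ := by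
  have h := (hφ _ _ (radialExtensionInv_ne_zero hr hx) (radialExtensionInv_ne_zero hr hy)).1
  rwa [radialExtension_radialExtensionInv (radius_pos hr hx),
    radialExtension_radialExtensionInv (radius_pos hr hy),
    div_le_iff₀ (pos_of_biLipschitzOn_radialExtension hφ hr hx), mul_comm] at h

noncomputable def quasiInversion (r : E → ℝ) (x : E) : E :=
  (r (‖x‖⁻¹ • x) ^ 2 / ‖x‖ ^ 2) • x

theorem quasiInversion_eq_radialExtension_inversion {x : E} (hx : 0 < r (‖x‖⁻¹ • x)) :
    quasiInversion r x =
      radialExtension r ((1 / ‖radialExtensionInv r x‖) ^ 2 • radialExtensionInv r x) := by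
  rw [radialExtension_smul_of_nonneg (by positivity), radialExtension_radialExtensionInv hx,
    norm_radialExtensionInv, abs_of_pos hx, quasiInversion]
  congr 1
  field_simp

end NormedSpace

theorem norm_inversion_sub_inversion {F : Type*} [NormedAddCommGroup F] [InnerProductSpace ℝ F]
    {x y : F} (hx : x ≠ 0) (hy : y ≠ 0) :
    ‖(1 / ‖x‖) ^ 2 • x - (1 / ‖y‖) ^ 2 • y‖ = ‖x - y‖ / (‖x‖ * ‖y‖) := by
  rw [← dist_eq_norm, dist_div_norm_sq_smul hx hy, one_pow, dist_eq_norm, one_div_mul_eq_div]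

section InnerProductSpace

variable {E : Type*} [NormedAddCommGroup E] [InnerProductSpace ℝ E] {r : E → ℝ} {K : ℝ}

theorem quasiInversion_dist_bounds (hφ : BiLipschitzOn K (radialExtension r) {0}ᶜ)
    (hr : ∀ u : E, ‖u‖ = 1 → 0 < r u) {x y : E} (hx : x ≠ 0) (hy : y ≠ 0) :
    (1 / K ^ 4) * (‖x - y‖ / (‖x‖ * ‖y‖)) ≤ ‖quasiInversion r x - quasiInversion r y‖ ∧
      ‖quasiInversion r x - quasiInversion r y‖ ≤ K ^ 4 * (‖x - y‖ / (‖x‖ * ‖y‖)) := by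
  have hK := pos_of_biLipschitzOn_radialExtension hφ hr hx
  set a := radialExtensionInv r x
  set b := radialExtensionInv r y
  have ha : a ≠ 0 := radialExtensionInv_ne_zero hr hx
  have hb : b ≠ 0 := radialExtensionInv_ne_zero hr hy
  have hxy : ‖x - y‖ / (‖x‖ * ‖y‖) ≤ K ^ 3 * (‖a - b‖ / (‖a‖ * ‖b‖)) :=
    div_mul_le_pow_three_mul_div_mul hK.le (norm_nonneg _) (norm_pos_iff.2 hx)
      (norm_pos_iff.2 hy) (norm_pos_iff.2 ha) (norm_pos_iff.2 hb)
      (norm_sub_le_mul_norm_sub_radialExtensionInv hφ hr hx hy)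
      (norm_radialExtensionInv_le hφ hr hx) (norm_radialExtensionInv_le hφ hr hy)
  have hab : ‖a - b‖ / (‖a‖ * ‖b‖) ≤ K ^ 3 * (‖x - y‖ / (‖x‖ * ‖y‖)) :=
    div_mul_le_pow_three_mul_div_mul hK.le (norm_nonneg _) (norm_pos_iff.2 ha)
      (norm_pos_iff.2 hb) (norm_pos_iff.2 hx) (norm_pos_iff.2 hy)
      (norm_radialExtensionInv_sub_le hφ hr hx hy)
      (norm_le_mul_norm_radialExtensionInv hφ hr hx) (norm_le_mul_norm_radialExtensionInv hφ hr hy)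
  obtain ⟨hlow, hup⟩ := hφ _ _ (smul_ne_zero (by positivity : (1 / ‖a‖) ^ 2 ≠ 0) ha)
    (smul_ne_zero (by positivity : (1 / ‖b‖) ^ 2 ≠ 0) hb)
  rw [← quasiInversion_eq_radialExtension_inversion (radius_pos hr hx),
    ← quasiInversion_eq_radialExtension_inversion (radius_pos hr hy),
    norm_inversion_sub_inversion ha hb] at hlow hup
  constructor
  · calc 1 / K ^ 4 * (‖x - y‖ / (‖x‖ * ‖y‖))
        ≤ 1 / K ^ 4 * (K ^ 3 * (‖a - b‖ / (‖a‖ * ‖b‖))) := by gcongr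
      _ = ‖a - b‖ / (‖a‖ * ‖b‖) / K := by field_simp
      _ ≤ _ := hlow
  · calc _ ≤ K * (‖a - b‖ / (‖a‖ * ‖b‖)) := hup
      _ ≤ K * (K ^ 3 * (‖x - y‖ / (‖x‖ * ‖y‖))) := by gcongr
      _ = K ^ 4 * (‖x - y‖ / (‖x‖ * ‖y‖)) := by ring

end InnerProductSpace

theorem stmt19_general (n : ℕ) (r : EuclideanSpace ℝ (Fin n) → ℝ)
    (hr : ∀ u, ‖u‖ = 1 → 0 < r u) (L' : ℝ)
    (hphi1 : ∀ x y : EuclideanSpace ℝ (Fin n), x ≠ 0 → y ≠ 0 →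
      ‖x - y‖ / L' ≤ ‖r (‖x‖⁻¹ • x) • x - r (‖y‖⁻¹ • y) • y‖ ∧
      ‖r (‖x‖⁻¹ • x) • x - r (‖y‖⁻¹ • y) • y‖ ≤ L' * ‖x - y‖) :
    ∀ x y : EuclideanSpace ℝ (Fin n), x ≠ 0 → y ≠ 0 →
      (1 / L' ^ 4) * (‖x - y‖ / (‖x‖ * ‖y‖)) ≤
        ‖(r (‖x‖⁻¹ • x) ^ 2 / ‖x‖ ^ 2) • x - (r (‖y‖⁻¹ • y) ^ 2 / ‖y‖ ^ 2) • y‖ ∧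
      ‖(r (‖x‖⁻¹ • x) ^ 2 / ‖x‖ ^ 2) • x - (r (‖y‖⁻¹ • y) ^ 2 / ‖y‖ ^ 2) • y‖ ≤
        L' ^ 4 * (‖x - y‖ / (‖x‖ * ‖y‖)) := by
  exact fun _ _ hx hy => quasiInversion_dist_bounds hphi1 hr hx hy

/-- If the polar parametrization `u ↦ r(u)u` of `M` is `L`-bi-Lipschitz from the unit
sphere to `M`, and its radial extension `φ₁(x) = r(x/|x|)x` is `L'`-bi-Lipschitz on
`ℝⁿ \ {0}`, then the quasi-inversion `f_M(x) = r(x/|x|)² x/|x|²` satisfies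
`(1/L'⁴)|x−y|/(|x||y|) ≤ |f_M(x)−f_M(y)| ≤ L'⁴|x−y|/(|x||y|)`. -/
theorem stmt19 (n : ℕ) (r : EuclideanSpace ℝ (Fin n) → ℝ)
    (hr : ∀ u, ‖u‖ = 1 → 0 < r u) (L L' : ℝ) (hL : 1 ≤ L) (hL' : 1 ≤ L')
    (hphi : ∀ u v : EuclideanSpace ℝ (Fin n), ‖u‖ = 1 → ‖v‖ = 1 →
      ‖u - v‖ / L ≤ ‖r u • u - r v • v‖ ∧ ‖r u • u - r v • v‖ ≤ L * ‖u - v‖)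
    (hphi1 : ∀ x y : EuclideanSpace ℝ (Fin n), x ≠ 0 → y ≠ 0 →
      ‖x - y‖ / L' ≤ ‖r (‖x‖⁻¹ • x) • x - r (‖y‖⁻¹ • y) • y‖ ∧
      ‖r (‖x‖⁻¹ • x) • x - r (‖y‖⁻¹ • y) • y‖ ≤ L' * ‖x - y‖) :
    ∀ x y : EuclideanSpace ℝ (Fin n), x ≠ 0 → y ≠ 0 →
      (1 / L' ^ 4) * (‖x - y‖ / (‖x‖ * ‖y‖)) ≤
        ‖(r (‖x‖⁻¹ • x) ^ 2 / ‖x‖ ^ 2) • x - (r (‖y‖⁻¹ • y) ^ 2 / ‖y‖ ^ 2) • y‖ ∧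
      ‖(r (‖x‖⁻¹ • x) ^ 2 / ‖x‖ ^ 2) • x - (r (‖y‖⁻¹ • y) ^ 2 / ‖y‖ ^ 2) • y‖ ≤
        L' ^ 4 * (‖x - y‖ / (‖x‖ * ‖y‖)) :=
  stmt19_general n r hr L' hphi1
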